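/- arXiv:2409.18510 — 2 statements merged into one kernel-verified Lean document; each statement's English description precedes it below -/
import Mathlib

section
/- Let m ≥ 3 and n ≥ 3, and write m = 3k + ℓ with ℓ ≡ m (mod 3), ℓ ∈ {0,1,2}. Then γ_{r2}(C_m □ C_n) ≥ k·n + ℓ·n/2 = mn/3 + ℓ·n/6. -/
open SimpleGraph Finset

/-!
Column by column: if `w j` is the weight of the `j`-th copy of `C_m` in `C_m □ C_n`, then counting,
for each vertex of that copy, its own label twice plus the labels of its four neighbours gives
`2m ≤ 4 w j + w (j - 1) + w (j + 1)`. Averaging this only yields `Σ w ≥ mn/3`; the extra `ℓn/6`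
comes from integrality, through a discharging argument: a column with `2 w j ≥ 2k + ℓ` hands half
of its surplus `2 w j - (2k + ℓ)` to each neighbouring column, and every column with a deficit then
receives at least as much as it lacks.
-/

/-- `f` is a `k`-rainbow dominating function of `G`: every vertex with empty label
sees all `k` colors in its open neighborhood. -/
def IsRainbowDominating {V : Type*} (G : SimpleGraph V) (k : ℕ)
    (f : V → Finset (Fin k)) : Prop :=
  ∀ v, f v = ∅ → ∀ c : Fin k, ∃ u, G.Adj v u ∧ c ∈ f u

/-- The `k`-rainbow domination number: the minimum weight of a `k`-rainbow
dominating function. -/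
noncomputable def rainbowDomNum {V : Type*} [Fintype V] (G : SimpleGraph V) (k : ℕ) : ℕ :=
  sInf {w | ∃ f : V → Finset (Fin k), IsRainbowDominating G k f ∧ w = ∑ v, (f v).card}

theorem exists_sum_card_eq_rainbowDomNum {V : Type*} [Fintype V] (G : SimpleGraph V) (k : ℕ) :
    ∃ f, IsRainbowDominating G k f ∧ ∑ v, #(f v) = rainbowDomNum G k := by
  have hne : {w | ∃ f : V → Finset (Fin k), IsRainbowDominating G k f ∧
      w = ∑ v, (f v).card}.Nonempty :=
    ⟨_, fun _ => univ, fun v hv c => absurd hv (ne_empty_of_mem (mem_univ c)), rfl⟩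
  obtain ⟨f, hf, hw⟩ := Nat.sInf_mem hne
  exact ⟨f, hf, hw.symm⟩

theorem IsRainbowDominating.le_mul_card_add_sum {V ι : Type*} [Fintype ι] {G : SimpleGraph V}
    {k : ℕ} {f : V → Finset (Fin k)} (hf : IsRainbowDominating G k f) {v : V} {nb : ι → V}
    (hnb : ∀ u, G.Adj v u → ∃ t, nb t = u) :
    k ≤ k * #(f v) + ∑ t, #(f (nb t)) := by
  by_cases hv : f v = ∅
  · have hcover : univ ⊆ univ.biUnion fun t => f (nb t) := by
      intro c _
      obtain ⟨u, hvu, hc⟩ := hf v hv c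
      obtain ⟨t, rfl⟩ := hnb u hvu
      exact mem_biUnion.2 ⟨t, mem_univ t, hc⟩
    calc k = #(univ : Finset (Fin k)) := (card_fin k).symm
      _ ≤ #(univ.biUnion fun t => f (nb t)) := card_le_card hcover
      _ ≤ ∑ t, #(f (nb t)) := card_biUnion_le
      _ ≤ k * #(f v) + ∑ t, #(f (nb t)) := Nat.le_add_left _ _
  · calc k ≤ k * #(f v) := Nat.le_mul_of_pos_right k (card_pos.2 (nonempty_iff_ne_empty.2 hv))
      _ ≤ k * #(f v) + ∑ t, #(f (nb t)) := Nat.le_add_right _ _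

theorem cycleGraph_adj_finRotate {n : ℕ} {u v : Fin n} (h : (cycleGraph n).Adj u v) :
    v = finRotate n u ∨ v = (finRotate n).symm u := by
  match n with
  | 1 => exact absurd h cycleGraph_one_adj
  | n + 2 =>
    rw [Equiv.eq_symm_apply, finRotate_apply, finRotate_apply]
    rcases h with h | h
    exacts [Or.inr (eq_add_of_sub_eq' h).symm, Or.inl (eq_add_of_sub_eq' h)]

def columnWeight {α β : Type*} [Fintype α] {k : ℕ} (f : α × β → Finset (Fin k)) (j : β) : ℕ :=
  ∑ i, #(f (i, j))

theorem IsRainbowDominating.mul_le_columnWeight {m n k : ℕ} {f : Fin m × Fin n → Finset (Fin k)}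
    (hf : IsRainbowDominating (cycleGraph m □ cycleGraph n) k f) (j : Fin n) :
    k * m ≤ (k + 2) * columnWeight f j + columnWeight f ((finRotate n).symm j) +
      columnWeight f (finRotate n j) := by
  set σ := finRotate m
  set τ := finRotate n
  have hvertex (i : Fin m) : k ≤ k * #(f (i, j)) + (#(f (σ i, j)) + #(f (σ.symm i, j)) +
      #(f (i, τ j)) + #(f (i, τ.symm j))) := by
    have := hf.le_mul_card_add_sum (v := (i, j))
      (nb := ![(σ i, j), (σ.symm i, j), (i, τ j), (i, τ.symm j)]) fun u hu => by
        obtain ⟨a, b⟩ := u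
        rcases boxProd_adj.1 hu with ⟨ha, rfl⟩ | ⟨hb, rfl⟩
        · rcases cycleGraph_adj_finRotate ha with rfl | rfl
          exacts [⟨0, rfl⟩, ⟨1, rfl⟩]
        · rcases cycleGraph_adj_finRotate hb with rfl | rfl
          exacts [⟨2, rfl⟩, ⟨3, rfl⟩]
    simpa [Fin.sum_univ_four, add_assoc] using this
  have := sum_le_sum fun i (_ : i ∈ univ) => hvertex i
  simp only [sum_const, card_univ, Fintype.card_fin, smul_eq_mul, sum_add_distrib, ← mul_sum,
    Equiv.sum_comp σ (fun i => #(f (i, j))), Equiv.sum_comp σ.symm (fun i => #(f (i, j)))]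
    at this
  unfold columnWeight
  linarith

/-- The discharging rule, doubled: the middle column keeps `min 0` of its surplus and receives
half of the positive surplus of each neighbour. -/
theorem two_mul_min_add_max_add_max_nonneg (a b c k ℓ : ℤ) (hℓ0 : 0 ≤ ℓ) (hℓ : ℓ ≤ 2)
    (h : 2 * (3 * k + ℓ) ≤ 4 * b + a + c) :
    0 ≤ 2 * min 0 (2 * b - (2 * k + ℓ)) + max 0 (2 * a - (2 * k + ℓ)) +
      max 0 (2 * c - (2 * k + ℓ)) := by
  omega

theorem mul_card_le_two_mul_sum {ι : Type*} [Fintype ι] (σ : Equiv.Perm ι) (w : ι → ℤ)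
    (k ℓ : ℤ) (hℓ0 : 0 ≤ ℓ) (hℓ : ℓ ≤ 2)
    (hw : ∀ j, 2 * (3 * k + ℓ) ≤ 4 * w j + w (σ.symm j) + w (σ j)) :
    (2 * k + ℓ) * Fintype.card ι ≤ 2 * ∑ j, w j := by
  set c : ι → ℤ := fun j => 2 * w j - (2 * k + ℓ)
  have hstep j : 0 ≤ 2 * min 0 (c j) + max 0 (c (σ.symm j)) + max 0 (c (σ j)) :=
    two_mul_min_add_max_add_max_nonneg _ _ _ k ℓ hℓ0 hℓ (hw j)
  have hsplit : ∑ j, c j = ∑ j, min 0 (c j) + ∑ j, max 0 (c j) := by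
    rw [← sum_add_distrib]
    exact sum_congr rfl fun j _ => by rw [min_add_max, zero_add]
  have hsum : ∑ j, (2 * min 0 (c j) + max 0 (c (σ.symm j)) + max 0 (c (σ j))) =
      2 * ∑ j, c j := by
    rw [sum_add_distrib, sum_add_distrib, Equiv.sum_comp σ.symm (fun j => max 0 (c j)),
      Equiv.sum_comp σ (fun j => max 0 (c j)), ← mul_sum, hsplit]
    ring
  have := hsum ▸ sum_nonneg fun j _ => hstep j
  simp only [c, sum_sub_distrib, ← mul_sum, sum_const, card_univ, nsmul_eq_mul] at this
  linarith

theorem IsRainbowDominating.mul_le_two_mul_sum_card_torus {m n k ℓ : ℕ} (hkl : m = 3 * k + ℓ)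
    (hℓ : ℓ < 3) {f : Fin m × Fin n → Finset (Fin 2)}
    (hf : IsRainbowDominating (cycleGraph m □ cycleGraph n) 2 f) :
    (2 * k + ℓ) * n ≤ 2 * ∑ v, #(f v) := by
  have hcolumns := mul_card_le_two_mul_sum (finRotate n) (fun j => (columnWeight f j : ℤ)) k ℓ
    (Int.natCast_nonneg ℓ) (by omega) fun j => by
      have := hf.mul_le_columnWeight j
      omega
  have hweight : ∑ v, #(f v) = ∑ j, columnWeight f j := Fintype.sum_prod_type_right _
  rw [Fintype.card_fin] at hcolumns
  zify
  rw [← Nat.cast_sum, hweight, Nat.cast_sum]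
  exact hcolumns

theorem two_rainbow_dom_cycles_lower_general (m n k ℓ : ℕ)
    (hkl : m = 3 * k + ℓ) (hℓ : ℓ < 3) :
    (k : ℚ) * n + (ℓ : ℚ) * n / 2 ≤ rainbowDomNum (cycleGraph m □ cycleGraph n) 2 ∧
      (k : ℚ) * n + (ℓ : ℚ) * n / 2 = (m : ℚ) * n / 3 + (ℓ : ℚ) * n / 6 := by
  have hm : (m : ℚ) = 3 * k + ℓ := by exact_mod_cast hkl
  refine ⟨?_, by rw [hm]; ring⟩
  obtain ⟨f, hf, hw⟩ := exists_sum_card_eq_rainbowDomNum (cycleGraph m □ cycleGraph n) 2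
  have hbound : ((2 * k + ℓ) * n : ℚ) ≤ 2 * ∑ v, #(f v) := by
    exact_mod_cast hf.mul_le_two_mul_sum_card_torus hkl hℓ
  rw [← hw]
  push_cast at hbound ⊢
  linarith

theorem two_rainbow_dom_cycles_lower (m n k ℓ : ℕ) (hm : 3 ≤ m) (hn : 3 ≤ n)
    (hkl : m = 3 * k + ℓ) (hℓ : ℓ < 3) :
    (k : ℚ) * n + (ℓ : ℚ) * n / 2 ≤ rainbowDomNum (cycleGraph m □ cycleGraph n) 2 ∧
      (k : ℚ) * n + (ℓ : ℚ) * n / 2 = (m : ℚ) * n / 3 + (ℓ : ℚ) * n / 6 :=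
  two_rainbow_dom_cycles_lower_general m n k ℓ hkl hℓ
end

section
/- Let n ≡ 0 (mod 6), n ≥ 6, and m ≥ 3. Then γ_{r2}(C_m □ C_n) ≤ ⌈m/3⌉·n. -/
open SimpleGraph Finset

/-!
Label the cells of a set `S ⊆ V(G) × V(H)` by the colour of their `H`-coordinate in a proper
2-colouring of `H`. This is a 2-rainbow dominating function as soon as every cell outside `S` has a
neighbour in `S` in each of the two directions: the neighbour along `G` has the same colour as the
cell, the neighbour along `H` the other one.

For `G □ C_n` with `6 ∣ n` take `S = {(v, j) | j mod 3 ∈ T v}` for sets `T v ⊆ ℤ/3ℤ`. The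
`C_n`-condition holds as soon as every `T v` is nonempty, the `G`-condition when every residue missing
from `T v` lies in `T v'` for a neighbour `v'`, and `|S| = (n / 3) ∑ |T v|`. On `C_m` the diagonal
choice `T i = {i mod 3}` works on the first `3⌊m/3⌋` rows; the remaining rows get `ℤ/3ℤ` (one row)
or `{0}`, `{1, 2}` (two rows), so that `∑ |T i| = 3⌈m/3⌉`.
-/

lemma IsRainbowDominating.rainbowDomNum_le {V : Type*} [Fintype V] {G : SimpleGraph V} {k : ℕ}
    {f : V → Finset (Fin k)} (hf : IsRainbowDominating G k f) :
    rainbowDomNum G k ≤ ∑ v, #(f v) :=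
  Nat.sInf_le ⟨f, hf, rfl⟩

theorem rainbowDomNum_boxProd_le_card {V W : Type*} [Fintype V] [Fintype W]
    {G : SimpleGraph V} {H : SimpleGraph W} (χ : H.Coloring (Fin 2)) (S : Finset (V × W))
    (hG : ∀ p ∉ S, ∃ v, G.Adj p.1 v ∧ (v, p.2) ∈ S)
    (hH : ∀ p ∉ S, ∃ w, H.Adj p.2 w ∧ (p.1, w) ∈ S) :
    rainbowDomNum (G □ H) 2 ≤ #S := by
  classical
  let f : V × W → Finset (Fin 2) := fun p => if p ∈ S then {χ p.2} else ∅
  have hf : IsRainbowDominating (G □ H) 2 f := by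
    rintro p hp c
    have hpS : p ∉ S := fun h => by simp [f, h] at hp
    obtain ⟨v, hv, hvS⟩ := hG p hpS
    obtain ⟨w, hw, hwS⟩ := hH p hpS
    by_cases hc : c = χ p.2
    · exact ⟨(v, p.2), boxProd_adj.2 (Or.inl ⟨hv, rfl⟩), by simp [f, hvS, hc]⟩
    · have hcw : c = χ w :=
        (by decide : ∀ a b c : Fin 2, c ≠ a → b ≠ a → c = b) _ _ _ hc (χ.valid hw).symm
      exact ⟨(p.1, w), boxProd_adj.2 (Or.inr ⟨hw, rfl⟩), by simp [f, hwS, hcw]⟩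
  calc rainbowDomNum (G □ H) 2 ≤ ∑ p, #(f p) := hf.rainbowDomNum_le
    _ = #S := by simp [f, apply_ite card]

lemma natCast_val_add_of_dvd {d n : ℕ} (h : d ∣ n) (a b : Fin n) :
    (((a + b : Fin n) : ℕ) : ZMod d) = a.val + b.val := by
  rw [Fin.val_add, ← Nat.cast_add, ZMod.natCast_eq_natCast_iff', Nat.mod_mod_of_dvd _ h]

lemma exists_cycleGraph_adj_natCast_val_eq {n : ℕ} (h3 : 3 ∣ n) (j : Fin n) {t : ZMod 3}
    (ht : t ≠ (j.val : ZMod 3)) : ∃ j', (cycleGraph n).Adj j j' ∧ (j'.val : ZMod 3) = t := by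
  obtain ⟨k, rfl⟩ : ∃ k, n = k + 2 := ⟨n - 2, by have := Nat.le_of_dvd j.pos h3; omega⟩
  have hsucc (i : Fin (k + 2)) : (((i + 1 : Fin (k + 2)) : ℕ) : ZMod 3) = i.val + 1 := by
    simp [natCast_val_add_of_dvd h3]
  rcases (by decide : ∀ s t : ZMod 3, t ≠ s → t = s + 1 ∨ t = s - 1) _ _ ht with rfl | rfl
  · exact ⟨j + 1, by simp [cycleGraph_adj], hsucc j⟩
  · refine ⟨j - 1, by simp [cycleGraph_adj], ?_⟩
    have := hsucc (j - 1)
    rw [sub_add_cancel] at this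
    exact eq_sub_of_add_eq this.symm

lemma card_filter_natCast_val_eq {d n : ℕ} [NeZero d] (h : d ∣ n) (t : ZMod d) :
    #{j : Fin n | (j.val : ZMod d) = t} = n / d := by
  have hmod (x : ℕ) : (x : ZMod d) = t ↔ x ≡ t.val [MOD d] := by
    rw [← ZMod.natCast_eq_natCast_iff, ZMod.natCast_zmod_val]
  rw [card_filter, Fin.sum_univ_eq_sum_range (fun x => if (x : ZMod d) = t then 1 else 0),
    ← card_filter]
  simp_rw [hmod]
  rw [← Nat.count_eq_card_filter_range, Nat.count_modEq_card _ (NeZero.pos d),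
    Nat.mod_eq_zero_of_dvd h]
  simp

theorem rainbowDomNum_boxProd_cycleGraph_le {V : Type*} [Fintype V] {G : SimpleGraph V} {n : ℕ}
    (h6 : 6 ∣ n) (T : V → Finset (ZMod 3)) (hT : ∀ v, (T v).Nonempty)
    (hcover : ∀ v t, t ∉ T v → ∃ v', G.Adj v v' ∧ t ∈ T v') :
    rainbowDomNum (G □ cycleGraph n) 2 ≤ (∑ v, #(T v)) * (n / 3) := by
  classical
  have h3 : 3 ∣ n := dvd_trans (by norm_num) h6
  have heven : Even n := even_iff_two_dvd.2 (dvd_trans (by norm_num) h6)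
  let χ := recolorOfEquiv _ finTwoEquiv.symm (cycleGraph.bicoloring_of_even n heven)
  let S : Finset (V × Fin n) := {p | (p.2.val : ZMod 3) ∈ T p.1}
  calc rainbowDomNum (G □ cycleGraph n) 2 ≤ #S := by
        refine rainbowDomNum_boxProd_le_card χ S (fun p hp => ?_) (fun p hp => ?_)
        · obtain ⟨v, hv, hvT⟩ := hcover p.1 _ (by simpa [S] using hp)
          exact ⟨v, hv, by simpa [S] using hvT⟩
        · obtain ⟨t, ht⟩ := hT p.1
          obtain ⟨j, hj, hjt⟩ :=
            exists_cycleGraph_adj_natCast_val_eq h3 p.2 (t := t) (by rintro rfl; simp_all [S])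
          exact ⟨j, hj, by simpa [S, hjt] using ht⟩
    _ = ∑ v, ∑ t ∈ T v, #{j : Fin n | (j.val : ZMod 3) = t} := by
        simp_rw [S, card_filter, Fintype.sum_prod_type]
        refine sum_congr rfl fun v _ => ?_
        rw [sum_comm]
        simp
    _ = (∑ v, #(T v)) * (n / 3) := by simp [card_filter_natCast_val_eq h3, sum_mul]

lemma exists_cycleGraph_adj_val_succ {m : ℕ} (hm : 2 ≤ m) (i : Fin m) :
    ∃ j, (cycleGraph m).Adj i j ∧ (j.val = i.val + 1 ∨ i.val + 1 = m ∧ j.val = 0) := by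
  obtain ⟨k, rfl⟩ : ∃ k, m = k + 2 := ⟨m - 2, by omega⟩
  refine ⟨i + 1, by simp [cycleGraph_adj], ?_⟩
  rw [Fin.val_add_one]
  split_ifs with h
  · simp [h]
  · exact Or.inl rfl

lemma exists_cycleGraph_adj_val_pred {m : ℕ} (hm : 2 ≤ m) (i : Fin m) :
    ∃ j, (cycleGraph m).Adj i j ∧ (j.val + 1 = i.val ∨ i.val = 0 ∧ j.val + 1 = m) := by
  obtain ⟨k, rfl⟩ : ∃ k, m = k + 2 := ⟨m - 2, by omega⟩
  refine ⟨i - 1, by simp [cycleGraph_adj], ?_⟩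
  rw [Fin.coe_sub_one]
  split_ifs with h
  · simp [h]
  · have : i.val ≠ 0 := fun h' => h (Fin.ext h')
    omega

def rowResidues (m i : ℕ) : Finset (ZMod 3) :=
  if i < 3 * (m / 3) then {(i : ZMod 3)}
  else if m % 3 = 1 then univ
  else if i = 3 * (m / 3) then {0}
  else {1, 2}

lemma mem_rowResidues {m i : ℕ} {t : ZMod 3} :
    t ∈ rowResidues m i ↔ (i < 3 * (m / 3) ∧ t.val = i % 3) ∨
      (3 * (m / 3) ≤ i ∧ (m % 3 = 1 ∨ (i = 3 * (m / 3) ↔ t.val = 0))) := by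
  unfold rowResidues
  split_ifs with h₁ h₂ h₃
  · simp [h₁, ← ZMod.val_natCast, (ZMod.val_injective 3).eq_iff]
  · simp [h₂]
    omega
  · simp [h₂, h₃]
  · have : 3 * (m / 3) ≤ i := by omega
    simp only [mem_insert, mem_singleton, h₁, h₂, h₃, this, false_and, true_and, false_or,
      false_iff, ZMod.val_eq_zero]
    revert t; decide

lemma rowResidues_nonempty (m i : ℕ) : (rowResidues m i).Nonempty := by
  unfold rowResidues
  split_ifs <;> simp

lemma sum_card_rowResidues (m : ℕ) : ∑ i ∈ range m, #(rowResidues m i) = 3 * ((m + 2) / 3) := by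
  have head : ∑ i ∈ range (3 * (m / 3)), #(rowResidues m i) = 3 * (m / 3) := by
    rw [sum_congr rfl fun i hi => by rw [rowResidues, if_pos (mem_range.1 hi), card_singleton]]
    simp
  rw [show range m = range (3 * (m / 3) + m % 3) by rw [Nat.div_add_mod], sum_range_add, head]
  rcases (by omega : m % 3 = 0 ∨ m % 3 = 1 ∨ m % 3 = 2) with h | h | h <;>
    simp [h, sum_range_succ, rowResidues, card_pair (by decide : (1 : ZMod 3) ≠ 2)] <;> omega

lemma exists_adj_mem_rowResidues {m : ℕ} (i : Fin m) (t : ZMod 3)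
    (ht : t ∉ rowResidues m i) : ∃ i', (cycleGraph m).Adj i i' ∧ t ∈ rowResidues m i' := by
  have hi := i.isLt
  have htv := ZMod.val_lt t
  rw [mem_rowResidues] at ht
  -- for `m ≤ 1` the only row is all of `ℤ/3ℤ`
  have hm : 2 ≤ m := by omega
  obtain ⟨iSucc, hSucc, hvSucc⟩ := exists_cycleGraph_adj_val_succ hm i
  obtain ⟨iPred, hPred, hvPred⟩ := exists_cycleGraph_adj_val_pred hm i
  by_cases hp : t ∈ rowResidues m iSucc
  · exact ⟨iSucc, hSucc, hp⟩
  · refine ⟨iPred, hPred, ?_⟩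
    rw [mem_rowResidues] at hp ⊢
    omega

lemma ceil_natCast_div_three (m : ℕ) : ⌈(m : ℚ) / 3⌉ = ((m + 2) / 3 : ℕ) := by
  have := Rat.ceil_natCast_div_natCast m 3
  push_cast at this ⊢
  omega

theorem two_rainbow_dom_cycles_upper_mod6_general (m n : ℕ)
    (hn6 : n % 6 = 0) :
    (rainbowDomNum (cycleGraph m □ cycleGraph n) 2 : ℤ) ≤ ⌈(m : ℚ) / 3⌉ * n := by
  have h6 : 6 ∣ n := Nat.dvd_of_mod_eq_zero hn6
  have hbound := rainbowDomNum_boxProd_cycleGraph_le h6 (fun i : Fin m => rowResidues m i)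
    (fun i => rowResidues_nonempty m i) exists_adj_mem_rowResidues
  rw [Fin.sum_univ_eq_sum_range (fun i => #(rowResidues m i)), sum_card_rowResidues, mul_comm 3,
    mul_assoc, Nat.mul_div_cancel' (dvd_trans (by norm_num) h6)] at hbound
  rw [ceil_natCast_div_three]
  exact_mod_cast hbound

theorem two_rainbow_dom_cycles_upper_mod6 (m n : ℕ) (hm : 3 ≤ m) (hn : 6 ≤ n)
    (hn6 : n % 6 = 0) :
    (rainbowDomNum (cycleGraph m □ cycleGraph n) 2 : ℤ) ≤ ⌈(m : ℚ) / 3⌉ * n :=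
  two_rainbow_dom_cycles_upper_mod6_general m n hn6
end
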